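/- The second-order Taylor coefficient at x = 0 of F(x) := E(p,q,E(a,b,x,−x),E(c,d,x,−x)) − E(p,q,x,−x) equals (a + b + c + d)/12 − (p+q)/6; hence if the invariance equation S_{p,q}(S_{a,b}(x,y),S_{c,d}(x,y)) = S_{p,q}(x,y) holds for all positive x,y, then (a+b+c+d)/4 = (p+q)/2. -/

import Mathlib

/-!
Put `u = m + w`, `v = m - w`. Factoring `exp (r u) - exp (r v) = 2 r w exp (r m) sinhc r w` with
`sinhc r w = sinh (r w) / (r w)` gives `E p q u v = m + Esym p q w`, where
`Esym p q = (log ∘ sinhc p - log ∘ sinhc q) / (p - q)` is smooth. Hence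
`F x = (A x + C x) / 2 + P ((A x - C x) / 2) - P x` with `A, C, P` the `Esym` of the three pairs.
Since `sinhc r w = 1 + r² w² / 6 + O(w⁴)`, each `Esym p q` vanishes to first order at `0` and has
second derivative `(p + q) / 3` there, so the composite term `P ((A - C) / 2)` is of fourth order
and `F''(0) = (a + b + c + d) / 6 - (p + q) / 3`. The invariance equation makes `F` vanish
identically.
-/

open Real
open scoped ContDiff

noncomputable def S (p q x y : ℝ) : ℝ :=
  (q * (x ^ p - y ^ p) / (p * (x ^ q - y ^ q))) ^ (1 / (p - q))

/-- The Stolarsky mean extended to the diagonal by S(x,x) = x. -/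
noncomputable def Sfull (p q x y : ℝ) : ℝ :=
  if x = y then x else S p q x y

noncomputable def E (p q u v : ℝ) : ℝ :=
  Real.log (Sfull p q (Real.exp u) (Real.exp v))

noncomputable def F (a b c d p q x : ℝ) : ℝ :=
  E p q (E a b x (-x)) (E c d x (-x)) - E p q x (-x)

theorem AnalyticOnNhd.dslope {𝕜 E : Type*} [NontriviallyNormedField 𝕜] [NormedAddCommGroup E]
    [NormedSpace 𝕜 E] {f : 𝕜 → E} {s : Set 𝕜} (hf : AnalyticOnNhd 𝕜 f s) (a : 𝕜) :
    AnalyticOnNhd 𝕜 (dslope f a) s := by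
  intro b hb
  rcases eq_or_ne b a with rfl | hba
  · obtain ⟨P, hP⟩ := hf b hb
    exact ⟨P.fslope, hP.has_fpower_series_dslope_fslope⟩
  · refine AnalyticAt.congr ?_ (dslope_eventuallyEq_slope_of_ne f hba).symm
    simp only [slope_fun_def]
    exact ((analyticAt_id.sub analyticAt_const).inv (sub_ne_zero.2 hba)).smul
      ((hf b hb).sub analyticAt_const)

theorem iteratedDeriv_succ_id_mul_zero {𝕜 : Type*} [NontriviallyNormedField 𝕜] {f : 𝕜 → 𝕜}
    {n : ℕ} (hf : ContDiffAt 𝕜 (n + 1) f 0) :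
    iteratedDeriv (n + 1) (fun x => x * f x) 0 = (n + 1) * iteratedDeriv n f 0 := by
  rw [iteratedDeriv_fun_mul (by fun_prop) hf, Finset.sum_eq_single 1]
  · simp [iteratedDeriv_fun_id_zero]
  · intro i _ hi
    simp [iteratedDeriv_fun_id_zero, hi]
  · simp

theorem iteratedDeriv_two_log {f : ℝ → ℝ} (hf : ContDiff ℝ 2 f) (hf0 : ∀ x, f x ≠ 0) (x : ℝ) :
    iteratedDeriv 2 (fun x => log (f x)) x
      = (iteratedDeriv 2 f x * f x - deriv f x ^ 2) / f x ^ 2 := by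
  have hd : Differentiable ℝ f := hf.differentiable (by norm_num)
  have hlog : deriv (fun x => log (f x)) = fun x => deriv f x / f x :=
    funext fun y => deriv.log (hd y) (hf0 y)
  rw [iteratedDeriv_succ, iteratedDeriv_one, hlog, iteratedDeriv_succ, iteratedDeriv_one]
  refine ((hf.differentiable_deriv_two x).hasDerivAt.div (hd x).hasDerivAt (hf0 x)).deriv.trans ?_
  ring

theorem iteratedDeriv_two_comp {g k : ℝ → ℝ} (hg : ContDiff ℝ 2 g) (hk : ContDiff ℝ 2 k) (x : ℝ) :
    iteratedDeriv 2 (fun x => g (k x)) x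
      = iteratedDeriv 2 g (k x) * deriv k x ^ 2 + deriv g (k x) * iteratedDeriv 2 k x := by
  have hgd : Differentiable ℝ g := hg.differentiable (by norm_num)
  have hkd : Differentiable ℝ k := hk.differentiable (by norm_num)
  have hchain : deriv (fun x => g (k x)) = fun x => deriv g (k x) * deriv k x :=
    funext fun y => deriv_comp y (hgd (k y)) (hkd y)
  rw [iteratedDeriv_succ, iteratedDeriv_one, hchain, iteratedDeriv_succ, iteratedDeriv_one,
    iteratedDeriv_succ, iteratedDeriv_one]
  refine (((hg.differentiable_deriv_two (k x)).hasDerivAt.comp x (hkd x).hasDerivAt).mul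
    (hk.differentiable_deriv_two x).hasDerivAt).deriv.trans ?_
  rw [Function.comp_apply]
  ring

/-- `sinh (p x) / (p x)`, continued by its limit `1` at `x = 0` when `p ≠ 0`. -/
noncomputable def sinhc (p : ℝ) : ℝ → ℝ := dslope (fun t => sinh (p * t) / p) 0

theorem mul_sinhc (p x : ℝ) : x * sinhc p x = sinh (p * x) / p := by
  unfold sinhc
  simpa using sub_smul_dslope (fun t => sinh (p * t) / p) 0 x

theorem contDiff_sinhc (p : ℝ) {n : WithTop ℕ∞} : ContDiff ℝ n (sinhc p) := by
  have : ContDiff ℝ ω (fun t => sinh (p * t) / p) := by fun_prop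
  exact (this.analyticOnNhd.dslope 0).contDiff

theorem iteratedDeriv_sinhc_zero (p : ℝ) (n : ℕ) :
    (n + 1) * iteratedDeriv n (sinhc p) 0 = p ^ (n + 1) * iteratedDeriv (n + 1) sinh 0 / p := by
  rw [← iteratedDeriv_succ_id_mul_zero (contDiff_sinhc p).contDiffAt, funext (mul_sinhc p),
    iteratedDeriv_div_const, iteratedDeriv_comp_const_mul contDiff_sinh]
  simp

section sinhc

variable {p : ℝ}

theorem sinhc_zero (hp : p ≠ 0) : sinhc p 0 = 1 := by
  simpa [hp] using iteratedDeriv_sinhc_zero p 0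

theorem deriv_sinhc_zero : deriv (sinhc p) 0 = 0 := by
  simpa using iteratedDeriv_sinhc_zero p 1

theorem iteratedDeriv_two_sinhc_zero (hp : p ≠ 0) : iteratedDeriv 2 (sinhc p) 0 = p ^ 2 / 3 := by
  have := iteratedDeriv_sinhc_zero p 2
  simp only [show iteratedDeriv (2 + 1) sinh = cosh by simp [iteratedDeriv_succ], cosh_zero] at this
  field_simp at this
  apply mul_right_cancel₀ hp
  push_cast at this
  linear_combination this / 3

theorem sinhc_pos (hp : p ≠ 0) (x : ℝ) : 0 < sinhc p x := by
  rcases eq_or_ne x 0 with rfl | hx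
  · simp [sinhc_zero hp]
  have hpx : p * x ≠ 0 := mul_ne_zero hp hx
  have : sinhc p x = sinh (p * x) / (p * x) := by
    have hmul := mul_sinhc p x
    field_simp at hmul ⊢
    linear_combination hmul
  rw [this]
  rcases hpx.lt_or_gt with h | h
  · exact div_pos_of_neg_of_neg (sinh_neg_iff.2 h) h
  · exact div_pos (sinh_pos_iff.2 h) h

end sinhc

noncomputable def Esym (p q w : ℝ) : ℝ := (log (sinhc p w) - log (sinhc q w)) / (p - q)

section Esym

variable {p q : ℝ}

theorem Esym_zero (hp : p ≠ 0) (hq : q ≠ 0) : Esym p q 0 = 0 := by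
  simp [Esym, sinhc_zero hp, sinhc_zero hq]

theorem contDiff_log_sinhc (hp : p ≠ 0) {n : ℕ∞} : ContDiff ℝ n (fun x => log (sinhc p x)) :=
  (contDiff_sinhc p).log fun x => (sinhc_pos hp x).ne'

theorem contDiff_Esym (hp : p ≠ 0) (hq : q ≠ 0) {n : ℕ∞} : ContDiff ℝ n (Esym p q) :=
  ((contDiff_log_sinhc hp).sub (contDiff_log_sinhc hq)).div_const _

theorem deriv_Esym_zero (hp : p ≠ 0) (hq : q ≠ 0) : deriv (Esym p q) 0 = 0 := by
  have h : ∀ r ≠ 0, deriv (fun x => log (sinhc r x)) 0 = 0 := fun r hr => by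
    rw [deriv.log ((contDiff_sinhc r (n := 1)).differentiable one_ne_zero 0) (sinhc_pos hr 0).ne',
      deriv_sinhc_zero, zero_div]
  unfold Esym
  rw [deriv_div_const, deriv_fun_sub, h p hp, h q hq, sub_zero, zero_div] <;>
    exact (contDiff_log_sinhc ‹_› (n := 1)).differentiable one_ne_zero 0

theorem iteratedDeriv_two_Esym_zero (hp : p ≠ 0) (hq : q ≠ 0) (hpq : p ≠ q) :
    iteratedDeriv 2 (Esym p q) 0 = (p + q) / 3 := by
  have h : ∀ r ≠ 0, iteratedDeriv 2 (fun x => log (sinhc r x)) 0 = r ^ 2 / 3 := fun r hr => by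
    rw [iteratedDeriv_two_log (contDiff_sinhc r) (fun x => (sinhc_pos hr x).ne'),
      iteratedDeriv_two_sinhc_zero hr, sinhc_zero hr, deriv_sinhc_zero]
    ring
  unfold Esym
  rw [iteratedDeriv_div_const, iteratedDeriv_fun_sub (contDiff_log_sinhc hp).contDiffAt
    (contDiff_log_sinhc hq).contDiffAt, h p hp, h q hq]
  field_simp [sub_ne_zero.2 hpq]
  ring

end Esym

theorem exp_rpow_sub_exp_rpow {r : ℝ} (hr : r ≠ 0) (m w : ℝ) :
    exp (m + w) ^ r - exp (m - w) ^ r = 2 * r * w * exp (r * m) * sinhc r w := by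
  have h := mul_sinhc r w
  field_simp at h
  have hsinh : exp ((m + w) * r) - exp ((m - w) * r) = 2 * exp (r * m) * sinh (w * r) := by
    rw [show (m + w) * r = r * m + w * r by ring, show (m - w) * r = r * m + -(w * r) by ring,
      exp_add, exp_add, sinh_eq]
    ring
  rw [← exp_mul, ← exp_mul]
  linear_combination hsinh - 2 * exp (r * m) * h

section mean

variable {p q : ℝ}

theorem S_exp (hp : p ≠ 0) (hq : q ≠ 0) (hpq : p ≠ q) (m : ℝ) {w : ℝ} (hw : w ≠ 0) :
    S p q (exp (m + w)) (exp (m - w)) = exp (m + Esym p q w) := by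
  have hpq' : p - q ≠ 0 := sub_ne_zero.2 hpq
  have hratio : sinhc p w / sinhc q w = exp ((p - q) * Esym p q w) := by
    rw [Esym, mul_div_cancel₀ _ hpq', exp_sub, exp_log (sinhc_pos hp w),
      exp_log (sinhc_pos hq w)]
  have hbase : q * (exp (m + w) ^ p - exp (m - w) ^ p) / (p * (exp (m + w) ^ q - exp (m - w) ^ q))
      = exp ((p - q) * (m + Esym p q w)) := by
    rw [exp_rpow_sub_exp_rpow hp, exp_rpow_sub_exp_rpow hq, mul_add, exp_add, ← hratio, sub_mul,
      exp_sub]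
    have := (sinhc_pos hq w).ne'
    field_simp
  rw [S, hbase, ← exp_mul]
  field_simp

theorem Sfull_exp (hp : p ≠ 0) (hq : q ≠ 0) (hpq : p ≠ q) (u v : ℝ) :
    Sfull p q (exp u) (exp v) = exp ((u + v) / 2 + Esym p q ((u - v) / 2)) := by
  obtain ⟨m, w, rfl, rfl⟩ : ∃ m w, u = m + w ∧ v = m - w := ⟨(u + v) / 2, (u - v) / 2, by ring, by ring⟩
  rw [show (m + w + (m - w)) / 2 = m by ring, show (m + w - (m - w)) / 2 = w by ring]
  rcases eq_or_ne w 0 with rfl | hw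
  · simp [Sfull, Esym_zero hp hq]
  · rw [Sfull, if_neg (exp_injective.ne (by contrapose! hw; linarith)), S_exp hp hq hpq m hw]

theorem E_eq (hp : p ≠ 0) (hq : q ≠ 0) (hpq : p ≠ q) (u v : ℝ) :
    E p q u v = (u + v) / 2 + Esym p q ((u - v) / 2) := by
  rw [E, Sfull_exp hp hq hpq, log_exp]

theorem exp_E (hp : p ≠ 0) (hq : q ≠ 0) (hpq : p ≠ q) (u v : ℝ) :
    exp (E p q u v) = Sfull p q (exp u) (exp v) := by
  rw [E_eq hp hq hpq, Sfull_exp hp hq hpq]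

theorem E_neg (hp : p ≠ 0) (hq : q ≠ 0) (hpq : p ≠ q) (x : ℝ) : E p q x (-x) = Esym p q x := by
  rw [E_eq hp hq hpq]
  ring_nf

end mean

section F

variable {a b c d p q : ℝ}

theorem F_eq (ha : a ≠ 0) (hb : b ≠ 0) (hab : a ≠ b) (hc : c ≠ 0) (hd : d ≠ 0) (hcd : c ≠ d)
    (hp : p ≠ 0) (hq : q ≠ 0) (hpq : p ≠ q) :
    F a b c d p q = fun x => (Esym a b x + Esym c d x) / 2
      + Esym p q ((Esym a b x - Esym c d x) / 2) - Esym p q x := by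
  ext x
  rw [F, E_neg ha hb hab, E_neg hc hd hcd, E_neg hp hq hpq, E_eq hp hq hpq]

theorem iteratedDeriv_two_F_zero (ha : a ≠ 0) (hb : b ≠ 0) (hab : a ≠ b)
    (hc : c ≠ 0) (hd : d ≠ 0) (hcd : c ≠ d) (hp : p ≠ 0) (hq : q ≠ 0) (hpq : p ≠ q) :
    iteratedDeriv 2 (F a b c d p q) 0 = (a + b + c + d) / 6 - (p + q) / 3 := by
  have hA := contDiff_Esym ha hb (n := 2)
  have hC := contDiff_Esym hc hd (n := 2)
  have hP := contDiff_Esym hp hq (n := 2)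
  have hK : ContDiff ℝ 2 fun x => (Esym a b x - Esym c d x) / 2 := by fun_prop
  have hK0 : (Esym a b 0 - Esym c d 0) / 2 = 0 := by
    rw [Esym_zero ha hb, Esym_zero hc hd]; ring
  have hK1 : deriv (fun x => (Esym a b x - Esym c d x) / 2) 0 = 0 := by
    rw [deriv_div_const, deriv_fun_sub (hA.differentiable two_ne_zero 0)
      (hC.differentiable two_ne_zero 0), deriv_Esym_zero ha hb, deriv_Esym_zero hc hd]
    ring
  rw [F_eq ha hb hab hc hd hcd hp hq hpq, iteratedDeriv_fun_sub (by fun_prop) hP.contDiffAt,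
    iteratedDeriv_fun_add (by fun_prop) (by fun_prop), iteratedDeriv_div_const,
    iteratedDeriv_fun_add hA.contDiffAt hC.contDiffAt, iteratedDeriv_two_comp hP hK, hK0, hK1,
    deriv_Esym_zero hp hq, iteratedDeriv_two_Esym_zero ha hb hab,
    iteratedDeriv_two_Esym_zero hc hd hcd, iteratedDeriv_two_Esym_zero hp hq hpq]
  ring

theorem F_eq_zero_of_invariant (ha : a ≠ 0) (hb : b ≠ 0) (hab : a ≠ b)
    (hc : c ≠ 0) (hd : d ≠ 0) (hcd : c ≠ d)
    (hinv : ∀ x y : ℝ, 0 < x → 0 < y → Sfull p q (Sfull a b x y) (Sfull c d x y) = Sfull p q x y) :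
    F a b c d p q = 0 := by
  ext x
  rw [F, E.eq_1 p q (E a b x (-x)), exp_E ha hb hab, exp_E hc hd hcd,
    hinv _ _ (exp_pos x) (exp_pos (-x))]
  exact sub_self _

end F

theorem second_taylor_coefficient (a b c d p q : ℝ)
    (hpq : p * q * (p - q) ≠ 0) (hab : a * b * (a - b) ≠ 0)
    (hcd : c * d * (c - d) ≠ 0) :
    iteratedDeriv 2 (F a b c d p q) 0 / (Nat.factorial 2 : ℝ) =
      (a + b + c + d) / 12 - (p + q) / 6 ∧
    ((∀ x y : ℝ, 0 < x → 0 < y →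
        Sfull p q (Sfull a b x y) (Sfull c d x y) = Sfull p q x y) →
      (a + b + c + d) / 4 = (p + q) / 2) := by
  simp only [mul_ne_zero_iff, sub_ne_zero] at hpq hab hcd
  obtain ⟨⟨hp, hq⟩, hpq⟩ := hpq
  obtain ⟨⟨ha, hb⟩, hab⟩ := hab
  obtain ⟨⟨hc, hd⟩, hcd⟩ := hcd
  have hcoeff : iteratedDeriv 2 (F a b c d p q) 0 / (Nat.factorial 2 : ℝ) =
      (a + b + c + d) / 12 - (p + q) / 6 := by
    rw [iteratedDeriv_two_F_zero ha hb hab hc hd hcd hp hq hpq, Nat.factorial_two]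
    ring
  refine ⟨hcoeff, fun hinv => ?_⟩
  rw [F_eq_zero_of_invariant ha hb hab hc hd hcd hinv, iteratedDeriv_const_zero] at hcoeff
  linarith
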